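/- arXiv:1910.08745 — 2 statements merged into one kernel-verified Lean document; each statement's English description precedes it below -/
import Mathlib

section
/- Let G be a single unicast index coding problem on [N] such that the cyclic permutation σ of [N] defined by σ(i) = (i mod N) + 1 is an automorphism of G, and let (E, D_1,...,D_N) be a valid index code for G with broadcast rate β and locality r. Then there exists a valid index code for G (over the same alphabet) with broadcast rate β and locality at most r whose query sets R'_1,...,R'_N satisfy: (i) |R'_1| = |R'_2| = ... = |R'_N|, and (ii) |R'_1 ∩ R'_2| = |R'_2 ∩ R'_3| = ... = |R'_{N−1} ∩ R'_N| = |R'_N ∩ R'_1|. -/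
/-!
Time-sharing over the cyclic shifts. Split every message into `N` blocks and, in block `t`, run
the given code on the messages relabelled by `j ↦ j + t`; since the shift is an automorphism,
receiver `i` decodes block `t` as receiver `i - t` of the original code, querying `R (i - t)`.
Its query set then has size `∑ₛ |R s|` for every `i`, so the rate is unchanged and the locality
is an average of the original ones, and translating the block index by `1` carries
`R' i ∩ R' (i + 1)` onto `R' (i + 1) ∩ R' (i + 2)`.
-/

/-- A valid (possibly non-linear) index code for the single unicast index coding problem
with side information sets `K`, over alphabet `A`, with message length `M`, codelength `ℓ`
and query sets `R`. -/
def IsValidCode {N : ℕ} (K : Fin N → Finset (Fin N)) (A : Type) (M ℓ : ℕ)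
    (R : Fin N → Finset (Fin ℓ)) : Prop :=
  ∃ E : (Fin N → Fin M → A) → (Fin ℓ → A),
    ∀ i : Fin N,
      ∃ D : ({k : Fin ℓ // k ∈ R i} → A) → ({j : Fin N // j ∈ K i} → Fin M → A) → (Fin M → A),
        ∀ x : Fin N → Fin M → A,
          D (fun k => E x k.1) (fun j => x j.1) = x i

open Finset

/-- `IsValidCode K A M ℓ R` is `IsIndexCode K A (Fin M) (Fin ℓ) R` by definition. -/
def IsIndexCode {G : Type} (K : G → Finset G) (A ι κ : Type) (R : G → Finset κ) : Prop :=
  ∃ E : (G → ι → A) → (κ → A),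
    ∀ i : G,
      ∃ D : ({k : κ // k ∈ R i} → A) → ({j : G // j ∈ K i} → ι → A) → (ι → A),
        ∀ x : G → ι → A, D (fun k => E x k.1) (fun j => x j.1) = x i

namespace IsIndexCode

variable {G : Type} {K : G → Finset G} {A ι κ : Type} {R : G → Finset κ}

theorem reindex {ι' κ' : Type} (h : IsIndexCode K A ι κ R) (e : ι ≃ ι') (f : κ ≃ κ') :
    IsIndexCode K A ι' κ' fun i => (R i).map f.toEmbedding := by
  obtain ⟨E, hE⟩ := h
  refine ⟨fun x k' => E (fun j m => x j (e m)) (f.symm k'), fun i => ?_⟩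
  obtain ⟨D, hD⟩ := hE i
  refine ⟨fun y z m' => D (fun k => y ⟨f k, mem_map_of_mem _ k.2⟩)
    (fun j m => z j (e m)) (e.symm m'), fun x => funext fun m' => ?_⟩
  simp only [Equiv.symm_apply_apply, hD, Equiv.apply_symm_apply]

end IsIndexCode

section TimeShare

variable {G κ : Type} [AddCommGroup G] [Fintype G] [Fintype κ] [DecidableEq κ]

def timeShare (R : G → Finset κ) (i : G) : Finset (G × κ) :=
  univ.filter fun p => p.2 ∈ R (i - p.1)

@[simp]
theorem mem_timeShare {R : G → Finset κ} {i : G} {p : G × κ} :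
    p ∈ timeShare R i ↔ p.2 ∈ R (i - p.1) := by
  simp [timeShare]

theorem card_timeShare (R : G → Finset κ) (i : G) :
    #(timeShare R i) = ∑ s, #(R s) := by
  rw [timeShare, card_filter, Fintype.sum_prod_type]
  simp only [sum_boole, filter_mem_eq_inter, univ_inter, Nat.cast_id]
  exact (Equiv.subLeft i).sum_comp fun s => #(R s)

theorem timeShare_add (R : G → Finset κ) (i s : G) :
    timeShare R (i + s) =
      (timeShare R s).map ((Equiv.addRight i).prodCongr (Equiv.refl κ)).toEmbedding := by
  ext p
  rw [mem_map_equiv, mem_timeShare, mem_timeShare]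
  simp only [Equiv.prodCongr_symm, Equiv.addRight_symm, Equiv.refl_symm, Equiv.prodCongr_apply,
    Equiv.coe_addRight, Equiv.coe_refl, Prod.map_fst, Prod.map_snd, id_eq]
  rw [show s - (p.1 + -i) = i + s - p.1 by abel]

theorem card_timeShare_inter_add [DecidableEq G] (R : G → Finset κ) (i s : G) :
    #(timeShare R i ∩ timeShare R (i + s)) = #(timeShare R 0 ∩ timeShare R s) := by
  calc #(timeShare R i ∩ timeShare R (i + s))
      _ = #((timeShare R 0 ∩ timeShare R s).map
          ((Equiv.addRight i).prodCongr (Equiv.refl κ)).toEmbedding) := by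
        rw [map_inter, ← timeShare_add, ← timeShare_add, add_zero]
      _ = #(timeShare R 0 ∩ timeShare R s) := card_map _

theorem isIndexCode_timeShare {A ι : Type} {K : G → Finset G} {R : G → Finset κ}
    (hK : ∀ t i j, j ∈ K i → j + t ∈ K (i + t)) (h : IsIndexCode K A ι κ R) :
    IsIndexCode K A (G × ι) (G × κ) (timeShare R) := by
  obtain ⟨E, hE⟩ := h
  choose D hD using hE
  refine ⟨fun x p => E (fun j m => x (j + p.1) (p.1, m)) p.2, fun i => ?_⟩
  refine ⟨fun y z p => D (i - p.1) (fun k => y ⟨(p.1, k.1), mem_timeShare.2 k.2⟩)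
    (fun j m => z ⟨j.1 + p.1, by simpa using hK p.1 _ _ j.2⟩ (p.1, m)) p.2,
    fun x => funext fun p => ?_⟩
  simp only [hD, sub_add_cancel]

end TimeShare

open Fin.NatCast in
theorem Fin.rel_add_add_of_rel_add_one {N : ℕ} [NeZero N] {S : Fin N → Fin N → Prop}
    (h : ∀ i j, S i j → S (i + 1) (j + 1)) (t : Fin N) {i j : Fin N} (hS : S i j) :
    S (i + t) (j + t) := by
  obtain ⟨n, rfl⟩ : ∃ n : ℕ, (n : Fin N) = t := ⟨t.val, Fin.cast_val_eq_self t⟩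
  induction n with
  | zero => simpa using hS
  | succ n ih =>
    rw [Nat.cast_succ, ← add_assoc, ← add_assoc]
    exact h _ _ ih

theorem sum_div_card_mul_le {ι : Type} [Fintype ι] [Nonempty ι] {f : ι → ℝ} {M r : ℝ}
    (hM : 0 < M) (h : ∀ i, f i / M ≤ r) : (∑ i, f i) / (Fintype.card ι * M) ≤ r := by
  rw [div_le_iff₀ (by positivity)]
  calc ∑ i, f i ≤ Fintype.card ι • (r * M) :=
        sum_le_card_nsmul _ _ _ fun i _ => (div_le_iff₀ hM).1 (h i)
    _ = r * (Fintype.card ι * M) := by rw [nsmul_eq_mul]; ring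

theorem cyclic_symmetrization_general
    {N : ℕ} [NeZero N]
    (K : Fin N → Finset (Fin N))
    (hauto : ∀ i j : Fin N, j ∈ K i ↔ j + 1 ∈ K (i + 1))
    (A : Type)
    {M ℓ : ℕ} (hM : 0 < M)
    (R : Fin N → Finset (Fin ℓ))
    (hvalid : IsValidCode K A M ℓ R)
    (r : ℝ) (hr : ∀ i, ((R i).card : ℝ) / M ≤ r) :
    ∃ (M' ℓ' : ℕ) (R' : Fin N → Finset (Fin ℓ')),
      0 < M' ∧ IsValidCode K A M' ℓ' R' ∧
      (ℓ' : ℝ) / M' = (ℓ : ℝ) / M ∧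
      (∀ i, ((R' i).card : ℝ) / M' ≤ r) ∧
      (∀ i j : Fin N, (R' i).card = (R' j).card) ∧
      (∀ i : Fin N, ((R' i) ∩ (R' (i + 1))).card = ((R' 0) ∩ (R' 1)).card) := by
  have hshift : ∀ t i j, j ∈ K i → j + t ∈ K (i + t) := fun t _ _ =>
    Fin.rel_add_add_of_rel_add_one (S := fun i j => j ∈ K i) (fun i j => (hauto i j).1) t
  refine ⟨N * M, N * ℓ, fun i => (timeShare R i).map finProdFinEquiv.toEmbedding,
    Nat.mul_pos (NeZero.pos N) hM,
    (isIndexCode_timeShare hshift hvalid).reindex finProdFinEquiv finProdFinEquiv, ?_,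
    fun i => ?_, fun i j => ?_, fun i => ?_⟩
  · push_cast
    exact mul_div_mul_left _ _ (Nat.cast_ne_zero.2 (NeZero.ne N))
  · simpa [card_timeShare] using sum_div_card_mul_le (by positivity) hr
  · simp only [card_map, card_timeShare]
  · simpa [← map_inter] using card_timeShare_inter_add R i 1

/-- If the cyclic shift `σ(i) = i + 1` of `Fin N` is an automorphism of the
side information graph and there is a valid index code with rate `β = ℓ/M` and locality at
most `r`, then there is a valid index code (over the same alphabet) with the same rate and
locality at most `r` whose query sets `R'` satisfy `|R'_1| = ⋯ = |R'_N|` and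
`|R'_i ∩ R'_{i+1}|` constant (cyclically). -/
theorem cyclic_symmetrization
    {N : ℕ} [NeZero N]
    (K : Fin N → Finset (Fin N)) (hK : ∀ i, i ∉ K i)
    (hauto : ∀ i j : Fin N, j ∈ K i ↔ j + 1 ∈ K (i + 1))
    (A : Type) [Fintype A] (hA : 2 ≤ Fintype.card A)
    {M ℓ : ℕ} (hM : 0 < M)
    (R : Fin N → Finset (Fin ℓ))
    (hvalid : IsValidCode K A M ℓ R)
    (r : ℝ) (hr : ∀ i, ((R i).card : ℝ) / M ≤ r) :
    ∃ (M' ℓ' : ℕ) (R' : Fin N → Finset (Fin ℓ')),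
      0 < M' ∧ IsValidCode K A M' ℓ' R' ∧
      (ℓ' : ℝ) / M' = (ℓ : ℝ) / M ∧
      (∀ i, ((R' i).card : ℝ) / M' ≤ r) ∧
      (∀ i j : Fin N, (R' i).card = (R' j).card) ∧
      (∀ i : Fin N, ((R' i) ∩ (R' (i + 1))).card = ((R' 0) ∩ (R' 1)).card) :=
  cyclic_symmetrization_general K hauto A hM R hvalid r hr
end

section
/- Let L ∈ F_q^{N×ℓ} be a scalar linear encoder for G with query sets R_1,...,R_N, and suppose for each i ∈ [N] there are nonzero scalars α_{i,k} ∈ F_q (k ∈ R_i) and a vector u_i ∈ F_q^N with supp(u_i) ⊆ K_i such that e_i + u_i = ∑_{k∈R_i} α_{i,k} L_k; let A be the N×N matrix whose i-th column is e_i + u_i. If z is a nonzero vector in the null space of A with S = supp(z), and the columns L_k for k ∈ ∪_{i∈S} R_i are linearly independent, then ∑_{i∈S} |R_i| ≥ 2·|∪_{i∈S} R_i|. -/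
/-- Let `L ∈ F_q^{N×ℓ}` be a scalar linear encoder for `G` with query sets
`R`, with decoding data: nonzero coefficients `α i k` (`k ∈ R i`) and side information
vectors `u i` supported on `K i` with `e_i + u_i = ∑_{k ∈ R i} α_{i,k} L_k`; let `A` be the
fitting matrix whose `i`-th column is `e_i + u_i`. If `z ≠ 0` lies in the null space of `A`,
`S = supp(z)`, and the columns `L_k` for `k ∈ ∪_{i∈S} R_i` are linearly independent, then
`∑_{i∈S} |R_i| ≥ 2·|∪_{i∈S} R_i|`. -/
theorem fitting_nullspace_support_query_bound
    {N ℓ : ℕ} (q : Type) [Field q] [Fintype q]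
    (K : Fin N → Finset (Fin N)) (hK : ∀ i, i ∉ K i)
    (L : Matrix (Fin N) (Fin ℓ) q) (R : Fin N → Finset (Fin ℓ))
    (u : Fin N → Fin N → q) (α : Fin N → Fin ℓ → q)
    (hu : ∀ i j, u i j ≠ 0 → j ∈ K i)
    (hα : ∀ i, ∀ k ∈ R i, α i k ≠ 0)
    (heq : ∀ i j : Fin N,
      (Pi.single i (1 : q) : Fin N → q) j + u i j = ∑ k ∈ R i, α i k * L j k)
    (A : Matrix (Fin N) (Fin N) q)
    (hA : ∀ i j : Fin N, A j i = (Pi.single i (1 : q) : Fin N → q) j + u i j)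
    (z : Fin N → q) (hz : z ≠ 0) (hAz : A.mulVec z = 0)
    (S : Finset (Fin N)) (hS : ∀ i, i ∈ S ↔ z i ≠ 0)
    (hli : LinearIndependent q
      (fun k : {k : Fin ℓ // k ∈ S.biUnion R} => (fun j : Fin N => L j (k : Fin ℓ)))) :
    2 * (S.biUnion R).card ≤ ∑ i ∈ S, (R i).card := by
  classical
  set T := S.biUnion R with hT
  have hzS : ∀ i, i ∉ S → z i = 0 := by
    intro i hi
    by_contra h
    exact hi ((hS i).mpr h)
  have hfil : ∀ i ∈ S, T.filter (fun k => k ∈ R i) = R i := by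
    intro i hi
    ext k
    simp only [Finset.mem_filter, and_iff_right_iff_imp]
    intro hk
    exact Finset.mem_biUnion.mpr ⟨i, hi, hk⟩
  -- Step 1: the coefficients vanish
  have key : ∀ k ∈ T, ∑ i ∈ S.filter (fun i => k ∈ R i), z i * α i k = 0 := by
    rw [Fintype.linearIndependent_iff] at hli
    have main := hli (fun kk : {k // k ∈ T} =>
      ∑ i ∈ S.filter (fun i => (kk : Fin ℓ) ∈ R i), z i * α i kk) ?_
    · intro k hk
      exact main ⟨k, hk⟩
    · funext j
      simp only [Finset.sum_apply, Pi.smul_apply, smul_eq_mul, Pi.zero_apply]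
      have h1 : ∑ kk : {k // k ∈ T},
          (∑ i ∈ S.filter (fun i => (kk : Fin ℓ) ∈ R i), z i * α i kk) * L j kk
          = ∑ k ∈ T, (∑ i ∈ S.filter (fun i => k ∈ R i), z i * α i k) * L j k :=
        Finset.sum_coe_sort T (fun k => (∑ i ∈ S.filter (fun i => k ∈ R i), z i * α i k) * L j k)
      rw [h1]
      have h2 : ∀ k ∈ T, (∑ i ∈ S.filter (fun i => k ∈ R i), z i * α i k) * L j k
          = ∑ i ∈ S, (if k ∈ R i then z i * α i k * L j k else 0) := by
        intro k hk
        rw [Finset.sum_mul, Finset.sum_filter]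
      rw [Finset.sum_congr rfl h2, Finset.sum_comm]
      have h3 : ∀ i ∈ S, ∑ k ∈ T, (if k ∈ R i then z i * α i k * L j k else 0)
          = z i * (A j i) := by
        intro i hi
        rw [← Finset.sum_filter, hfil i hi, hA, heq, Finset.mul_sum]
        congr 1
        funext k
        ring
      rw [Finset.sum_congr rfl h3]
      have h4 : ∑ i ∈ S, z i * A j i = ∑ i : Fin N, A j i * z i := by
        rw [Finset.sum_congr rfl (fun i _ => mul_comm (z i) (A j i))]
        refine Finset.sum_subset (Finset.subset_univ S) ?_
        intro i _ hi
        rw [hzS i hi, mul_zero]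
      rw [h4]
      have := congrFun hAz j
      simpa [Matrix.mulVec, dotProduct] using this
  -- Step 2: each k ∈ T is queried by at least two i ∈ S
  have h2le : ∀ k ∈ T, 2 ≤ (S.filter (fun i => k ∈ R i)).card := by
    intro k hk
    obtain ⟨i0, hi0S, hi0R⟩ := Finset.mem_biUnion.mp hk
    have hne : (S.filter (fun i => k ∈ R i)).Nonempty :=
      ⟨i0, Finset.mem_filter.mpr ⟨hi0S, hi0R⟩⟩
    have h1 : 1 ≤ (S.filter (fun i => k ∈ R i)).card := Finset.card_pos.mpr hne
    have hne1 : (S.filter (fun i => k ∈ R i)).card ≠ 1 := by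
      intro hcard
      obtain ⟨a, ha⟩ := Finset.card_eq_one.mp hcard
      have hsum := key k hk
      rw [ha, Finset.sum_singleton] at hsum
      have haf : a ∈ S.filter (fun i => k ∈ R i) := by rw [ha]; exact Finset.mem_singleton_self a
      obtain ⟨haS, haR⟩ := Finset.mem_filter.mp haf
      exact mul_ne_zero ((hS a).mp haS) (hα a k haR) hsum
    omega
  -- Step 3: double counting
  have hcount : ∑ i ∈ S, (R i).card = ∑ k ∈ T, (S.filter (fun i => k ∈ R i)).card := by
    have h5 : ∀ i ∈ S, (R i).card = ∑ k ∈ T, (if k ∈ R i then 1 else 0) := by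
      intro i hi
      rw [← Finset.sum_filter, hfil i hi, Finset.card_eq_sum_ones]
    rw [Finset.sum_congr rfl h5, Finset.sum_comm]
    exact Finset.sum_congr rfl fun k _ => by rw [← Finset.sum_filter, Finset.card_eq_sum_ones]
  rw [hcount]
  calc 2 * T.card = ∑ _k ∈ T, 2 := by rw [Finset.sum_const, smul_eq_mul, mul_comm]
    _ ≤ ∑ k ∈ T, (S.filter (fun i => k ∈ R i)).card := Finset.sum_le_sum h2le
end
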